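/- Let k be a field, G a finite group, β a normalized 3-cocycle on G with values in kˣ, and let (A, ρ) be a left module over D^β(k[G]) with π_g := ρ(⟨g,e⟩) and A_g := π_g(A). Then for all g, x ∈ G: (i) ρ(⟨g,x⟩) = π_g ∘ ρ(⟨g,x⟩) ∘ π_{x⁻¹gx}, so ρ(⟨g,x⟩) vanishes on A_h for h ≠ x⁻¹gx and maps A into A_g; and (ii) ρ(⟨g,x⟩) restricts to a k-linear isomorphism from A_{x⁻¹gx} onto A_g, with inverse the restriction of θ_{x⁻¹gx}(x⁻¹,x)⁻¹ · ρ(⟨x⁻¹gx, x⁻¹⟩). -/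

import Mathlib

/-! Since `ρ` is multiplicative, everything reduces to the product rule for basis elements:
the `⟨g,e⟩` are orthogonal idempotents absorbing `⟨g,x⟩` on the appropriate sides, and
`⟨x⁻¹gx,x⁻¹⟩⟨g,x⟩`, `⟨g,x⟩⟨x⁻¹gx,x⁻¹⟩` are the multiples `θ_{x⁻¹gx}(x⁻¹,x)⟨x⁻¹gx,e⟩`,
`θ_g(x,x⁻¹)⟨g,e⟩`, whose coefficients agree by the cocycle identity. -/

open scoped BigOperators TensorProduct

namespace StringyOrbifold

/-- A normalized 3-cocycle on `G` with values in `kˣ`. -/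
def IsNormalized3Cocycle {k G : Type*} [Field k] [Group G] (β : G → G → G → kˣ) : Prop :=
  (∀ g h l m : G, β g h l * β g (h * l) m * β h l m = β (g * h) l m * β g h (l * m)) ∧
  (∀ g h : G, β 1 g h = 1 ∧ β g 1 h = 1 ∧ β g h 1 = 1)

/-- A normalized 2-cocycle on `G` with values in `kˣ`. -/
def IsNormalized2Cocycle {k G : Type*} [Field k] [Group G] (α : G → G → kˣ) : Prop :=
  (∀ g h l : G, α g h * α (g * h) l = α h l * α g (h * l)) ∧
  (∀ g : G, α g 1 = 1 ∧ α 1 g = 1)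

/-- `θ_g(x,y) = β(g,x,y)·β(x,y,(xy)⁻¹g(xy)) / β(x,x⁻¹gx,y)`. -/
def ddTheta {k G : Type*} [Field k] [Group G] (β : G → G → G → kˣ) (g x y : G) : kˣ :=
  β g x y * β x y ((x * y)⁻¹ * g * (x * y)) / β x (x⁻¹ * g * x) y

/-- `γ_x(g₁,g₂) = β(g₁,g₂,x)·β(x,x⁻¹g₁x,x⁻¹g₂x) / β(g₁,x,x⁻¹g₂x)`. -/
def ddGamma {k G : Type*} [Field k] [Group G] (β : G → G → G → kˣ) (x g1 g2 : G) : kˣ :=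
  β g1 g2 x * β x (x⁻¹ * g1 * x) (x⁻¹ * g2 * x) / β g1 x (x⁻¹ * g2 * x)

/-- The trivial 3-cocycle. -/
def trivCocycle (k G : Type*) [Field k] [Group G] : G → G → G → kˣ := fun _ _ _ => 1

/-- The underlying `k`-vector space of the twisted Drinfel'd double `D^β(k[G])`:
the free `k`-module on the basis `⟨g,x⟩`, `(g,x) ∈ G × G`, realized as functions. -/
abbrev DD (k G : Type*) := G × G → k

/-- The function model for `D^β(k[G]) ⊗ D^β(k[G])`. -/
abbrev DD2 (k G : Type*) := (G × G) × (G × G) → k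

/-- The function model for the threefold tensor power of `D^β(k[G])`. -/
abbrev DD3 (k G : Type*) := (G × G) × (G × G) × (G × G) → k

/-- The basis element `⟨g,x⟩` of `D^β(k[G])`. -/
def ddBasis {k G : Type*} [Field k] [DecidableEq G] (g x : G) : DD k G :=
  fun p => if p = (g, x) then 1 else 0

/-- The multiplication of `D^β(k[G])`, the bilinear extension of
`⟨g,x⟩·⟨h,y⟩ = δ_{g,xhx⁻¹} θ_g(x,y) ⟨g,xy⟩`. -/
def ddMul {k G : Type*} [Field k] [Group G] [Fintype G]
    (β : G → G → G → kˣ) (a b : DD k G) : DD k G :=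
  fun p => ∑ x : G, a (p.1, x) * b (x⁻¹ * p.1 * x, x⁻¹ * p.2) * (ddTheta β p.1 x (x⁻¹ * p.2) : k)

/-- The identity `Σ_{h∈G} ⟨h,e⟩` of `D^β(k[G])`. -/
def ddOne (k G : Type*) [Field k] [Group G] [Fintype G] [DecidableEq G] : DD k G :=
  ∑ g : G, ddBasis g 1

/-- The elementary tensor `a ⊗ b` in the function model of `D^β(k[G]) ⊗ D^β(k[G])`. -/
def ddTensor {k G : Type*} [Field k] (a b : DD k G) : DD2 k G :=
  fun p => a p.1 * b p.2

/-- The elementary tensor `a ⊗ b ⊗ c` in the function model of the triple tensor power. -/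
def ddTensor3 {k G : Type*} [Field k] (a b c : DD k G) : DD3 k G :=
  fun p => a p.1 * b p.2.1 * c p.2.2

/-- Componentwise multiplication on `D^β(k[G]) ⊗ D^{β'}(k[G])` in the function model. -/
def dd2Mul {k G : Type*} [Field k] [Group G] [Fintype G]
    (β β' : G → G → G → kˣ) (a b : DD2 k G) : DD2 k G :=
  fun p => ∑ x : G, ∑ y : G,
    a ((p.1.1, x), (p.2.1, y)) *
      b ((x⁻¹ * p.1.1 * x, x⁻¹ * p.1.2), (y⁻¹ * p.2.1 * y, y⁻¹ * p.2.2)) *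
      (ddTheta β p.1.1 x (x⁻¹ * p.1.2) : k) * (ddTheta β' p.2.1 y (y⁻¹ * p.2.2) : k)

/-- Componentwise multiplication on the threefold tensor power of `D^β(k[G])`. -/
def dd3Mul {k G : Type*} [Field k] [Group G] [Fintype G]
    (β : G → G → G → kˣ) (a b : DD3 k G) : DD3 k G :=
  fun p => ∑ x : G, ∑ y : G, ∑ z : G,
    a ((p.1.1, x), (p.2.1.1, y), (p.2.2.1, z)) *
      b ((x⁻¹ * p.1.1 * x, x⁻¹ * p.1.2), (y⁻¹ * p.2.1.1 * y, y⁻¹ * p.2.1.2),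
        (z⁻¹ * p.2.2.1 * z, z⁻¹ * p.2.2.2)) *
      (ddTheta β p.1.1 x (x⁻¹ * p.1.2) : k) * (ddTheta β p.2.1.1 y (y⁻¹ * p.2.1.2) : k) *
      (ddTheta β p.2.2.1 z (z⁻¹ * p.2.2.2) : k)

/-- The comultiplication of `D^β(k[G])`: the linear extension of
`Δ(⟨g,x⟩) = Σ_{g₁g₂=g} γ_x(g₁,g₂) ⟨g₁,x⟩ ⊗ ⟨g₂,x⟩`. -/
def ddComul {k G : Type*} [Field k] [Group G] [DecidableEq G]
    (β : G → G → G → kˣ) (a : DD k G) : DD2 k G :=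
  fun p =>
    if p.1.2 = p.2.2 then (ddGamma β p.1.2 p.1.1 p.2.1 : k) * a (p.1.1 * p.2.1, p.1.2) else 0

/-- The map `id ⊗ Δ` from `D^β(k[G])^{⊗2}` to `D^β(k[G])^{⊗3}` in the function model. -/
def idTensorComul {k G : Type*} [Field k] [Group G] [DecidableEq G]
    (β : G → G → G → kˣ) (u : DD2 k G) : DD3 k G :=
  fun p => if p.2.1.2 = p.2.2.2 then
      (ddGamma β p.2.1.2 p.2.1.1 p.2.2.1 : k) * u (p.1, (p.2.1.1 * p.2.2.1, p.2.1.2))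
    else 0

/-- The map `Δ ⊗ id` from `D^β(k[G])^{⊗2}` to `D^β(k[G])^{⊗3}` in the function model. -/
def comulTensorId {k G : Type*} [Field k] [Group G] [DecidableEq G]
    (β : G → G → G → kˣ) (u : DD2 k G) : DD3 k G :=
  fun p => if p.1.2 = p.2.1.2 then
      (ddGamma β p.1.2 p.1.1 p.2.1.1 : k) * u ((p.1.1 * p.2.1.1, p.1.2), p.2.2)
    else 0

/-- The flip of the two tensor factors. -/
def ddSwap {k G : Type*} (u : DD2 k G) : DD2 k G := fun p => u (p.2, p.1)

/-- The counit `ε(⟨g,x⟩) = δ_{g,e}` of `D^β(k[G])`. -/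
def ddCounit {k G : Type*} [Field k] [Group G] [Fintype G] (a : DD k G) : k :=
  ∑ x : G, a (1, x)

/-- The injection `k[G]^* → D^β(k[G])`, `δ_g ↦ ⟨g,e⟩`. -/
def ddIota {k G : Type*} [Field k] [Group G] [DecidableEq G] (f : G → k) : DD k G :=
  fun p => if p.2 = 1 then f p.1 else 0

/-- The diagonal map `D^{ββ'}(k[G]) → D^β(k[G]) ⊗ D^{β'}(k[G])`, `⟨g,x⟩ ↦ ⟨g,x⟩ ⊗ ⟨g,x⟩`. -/
def ddDiag {k G : Type*} [Field k] [DecidableEq G] (a : DD k G) : DD2 k G :=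
  fun p => if p.1 = p.2 then a p.1 else 0

/-- The antipode of `D^β(k[G])`: the linear extension of
`S(⟨g,x⟩) = (θ_{g⁻¹}(x,x⁻¹)·γ_x(g,g⁻¹))⁻¹ ⟨x⁻¹g⁻¹x, x⁻¹⟩`. -/
def ddAntipode {k G : Type*} [Field k] [Group G] (β : G → G → G → kˣ) (a : DD k G) : DD k G :=
  fun p =>
    (((ddTheta β (p.2⁻¹ * p.1 * p.2) p.2⁻¹ p.2 *
        ddGamma β p.2⁻¹ (p.2⁻¹ * p.1⁻¹ * p.2) (p.2⁻¹ * p.1 * p.2))⁻¹ : kˣ) : k) *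
      a (p.2⁻¹ * p.1⁻¹ * p.2, p.2⁻¹)

/-- The antipode of the untwisted double `D(k[G])`: `S(⟨g,x⟩) = ⟨x⁻¹g⁻¹x, x⁻¹⟩`. -/
def ddAntipode0 {k G : Type*} [Field k] [Group G] (a : DD k G) : DD k G :=
  fun p => a (p.2⁻¹ * p.1⁻¹ * p.2, p.2⁻¹)

/-- The operator `φ(x)` on `D^β(k[G])^{comm}`: the linear extension of
`φ(x)(⟨h,y⟩) = (θ_{xhx⁻¹}(x,y)/θ_{xhx⁻¹}(xyx⁻¹,x))·⟨xhx⁻¹, xyx⁻¹⟩`. -/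
def ddPhi {k G : Type*} [Field k] [Group G] (β : G → G → G → kˣ) (x : G) (a : DD k G) :
    DD k G :=
  fun p => ((ddTheta β p.1 x (x⁻¹ * p.2 * x) / ddTheta β p.1 p.2 x : kˣ) : k) *
    a (x⁻¹ * p.1 * x, x⁻¹ * p.2 * x)

/-- The span of the basis elements `⟨g,x⟩` with `gx = xg`, i.e. `D^β(k[G])^{comm}`. -/
def ddCommSpan (k G : Type*) [Field k] [Group G] [DecidableEq G] : Submodule k (DD k G) :=
  Submodule.span k {v : DD k G | ∃ g x : G, g * x = x * g ∧ v = ddBasis g x}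

/-- The underlying space of the twisted group ring `k^α[G]`. -/
abbrev TG (k G : Type*) := G → k

/-- The basis element `1_g` of `k^α[G]`. -/
def tgBasis {k G : Type*} [Field k] [DecidableEq G] (g : G) : TG k G :=
  fun z => if z = g then 1 else 0

/-- The multiplication `1_g·1_h = α(g,h) 1_{gh}` of the twisted group ring `k^α[G]`. -/
def tgMul {k G : Type*} [Field k] [Group G] [Fintype G] (α : G → G → kˣ) (a b : TG k G) :
    TG k G :=
  fun z => ∑ x : G, a x * b (x⁻¹ * z) * (α x (x⁻¹ * z) : k)

/-- The identity `1_e` of `k^α[G]`. -/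
def tgOne (k G : Type*) [Field k] [Group G] [DecidableEq G] : TG k G := tgBasis 1

/-- The inverse `α(g,g⁻¹)⁻¹·1_{g⁻¹}` of the basis element `1_g` in `k^α[G]`. -/
def tgInvBasis {k G : Type*} [Field k] [Group G] [DecidableEq G] (α : G → G → kˣ) (g : G) :
    TG k G :=
  (((α g g⁻¹)⁻¹ : kˣ) : k) • tgBasis g⁻¹

/-- Conjugation `ρ(g)(a) = 1_g · a · (1_g)⁻¹` in the twisted group ring `k^α[G]`. -/
def tgConj {k G : Type*} [Field k] [Group G] [Fintype G] [DecidableEq G]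
    (α : G → G → kˣ) (g : G) (a : TG k G) : TG k G :=
  tgMul α (tgBasis g) (tgMul α a (tgInvBasis α g))

theorem comm_inv_left {G : Type*} [Group G] {g x : G} (h : x * g = g * x) :
    x⁻¹ * g = g * x⁻¹ := by
  rw [eq_mul_inv_iff_mul_eq, mul_assoc, ← h, ← mul_assoc, inv_mul_cancel, one_mul]

theorem comm_inv_mul {G : Type*} [Group G] {g x z : G} (hx : x * g = g * x)
    (hz : z * g = g * z) : (x⁻¹ * z) * g = g * (x⁻¹ * z) := by
  rw [mul_assoc, hz, ← mul_assoc, comm_inv_left hx, mul_assoc]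

/-- The index set `{(g,x) : x ∈ Z(g)}` of the direct sum `⊕_g k^{θ_g}[Z(g)]`. -/
abbrev CentPairs (G : Type*) [Group G] := Σ g : G, {x : G // x * g = g * x}

/-- The underlying space of `⊕_g k^{θ_g}[Z(g)]`. -/
abbrev TY (k G : Type*) [Group G] := CentPairs G → k

/-- The multiplication of `⊕_g k^{θ_g}[Z(g)]`: in the `g`-th summand,
`1_x·1_y = θ_g(x,y)·1_{xy}` for `x, y ∈ Z(g)`, and distinct summands multiply to `0`. -/
def tyMul {k G : Type*} [Field k] [Group G] [Fintype G] [DecidableEq G]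
    (β : G → G → G → kˣ) (a b : TY k G) : TY k G :=
  fun q => ∑ x : {x : G // x * q.1 = q.1 * x},
    a ⟨q.1, x⟩ * b ⟨q.1, ⟨(x : G)⁻¹ * (q.2 : G), comm_inv_mul x.2 q.2.2⟩⟩ *
      (ddTheta β q.1 (x : G) ((x : G)⁻¹ * (q.2 : G)) : k)

/-- The identity of `⊕_g k^{θ_g}[Z(g)]`. -/
def tyOne (k G : Type*) [Field k] [Group G] [DecidableEq G] : TY k G :=
  fun q => if (q.2 : G) = 1 then 1 else 0

/-- The map `⊕_g k^{θ_g}[Z(g)] → D^β(k[G])` sending `1_x` in the `g`-th summand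
to `⟨g,x⟩`. -/
def tyMap {k G : Type*} [Field k] [Group G] [DecidableEq G] (f : TY k G) : DD k G :=
  fun p => if h : p.2 * p.1 = p.1 * p.2 then f ⟨p.1, ⟨p.2, h⟩⟩ else 0

/-- The action of `D^{ββ'}(k[G])` on `A ⊗ B`, assigning to `⟨g,x⟩` the endomorphism
`ρ_A(⟨g,x⟩) ⊗ ρ_B(⟨g,x⟩)` and extending linearly. -/
noncomputable def ddTensorAction {k G A B : Type*} [Field k] [Group G] [Fintype G]
    [DecidableEq G] [AddCommGroup A] [Module k A] [AddCommGroup B] [Module k B]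
    (ρA : DD k G → (A →ₗ[k] A)) (ρB : DD k G → (B →ₗ[k] B)) (a : DD k G) :
    (A ⊗[k] B) →ₗ[k] (A ⊗[k] B) :=
  ∑ p : G × G, a p • TensorProduct.map (ρA (ddBasis p.1 p.2)) (ρB (ddBasis p.1 p.2))

section Cocycle

variable {k G : Type*} [Field k] [Group G] {β : G → G → G → kˣ}

lemma ddTheta_one_left (hβ : IsNormalized3Cocycle β) (g y : G) : ddTheta β g 1 y = 1 := by
  simp [ddTheta, hβ.2]

lemma ddTheta_one_right (hβ : IsNormalized3Cocycle β) (g x : G) : ddTheta β g x 1 = 1 := by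
  simp [ddTheta, hβ.2]

lemma ddTheta_inv_comm (hβ : IsNormalized3Cocycle β) (g x : G) :
    ddTheta β g x x⁻¹ = ddTheta β (x⁻¹ * g * x) x⁻¹ x := by
  obtain ⟨hc, hn⟩ := hβ
  have r1 : x * (x⁻¹ * g * x) = g * x := by group
  have r2 : x⁻¹ * g * x * x⁻¹ = x⁻¹ * g := by group
  have r3 : x⁻¹⁻¹ * (x⁻¹ * g * x) * x⁻¹ = g := by group
  have e1 := hc g x x⁻¹ x
  have e2 := hc x x⁻¹ g x
  have e3 := hc x (x⁻¹ * g * x) x⁻¹ x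
  have e4 := hc x x⁻¹ x (x⁻¹ * g * x)
  simp only [mul_inv_cancel, inv_mul_cancel, one_mul, mul_one, r1, r2,
    (hn _ _).1, (hn _ _).2.1, (hn _ _).2.2] at e1 e2 e3 e4
  simp only [ddTheta, mul_inv_cancel, inv_mul_cancel, one_mul, mul_one, inv_one, r3]
  rw [Units.ext_iff] at e1 e2 e3 e4 ⊢
  simp only [Units.val_mul, Units.val_div_eq_div_val] at e1 e2 e3 e4 ⊢
  rw [div_eq_div_iff (Units.ne_zero _) (Units.ne_zero _)]
  apply mul_right_cancel₀ (mul_ne_zero (Units.ne_zero (β x x⁻¹ x))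
    (Units.ne_zero (β x (x⁻¹ * g) x)))
  linear_combination
    ((β x x⁻¹ g : k) * (β x (x⁻¹ * g) x : k) * (β x⁻¹ g x : k)) * e1 +
    (β (g * x) x⁻¹ x : k) * e2 - ((β x x⁻¹ x : k) * (β x⁻¹ x (x⁻¹ * g * x) : k)) * e3 -
    (β (g * x) x⁻¹ x : k) * e4

end Cocycle

lemma ddMul_basis {k G : Type*} [Field k] [Group G] [Fintype G] [DecidableEq G]
    (β : G → G → G → kˣ) (g x h y : G) :
    ddMul β (ddBasis g x) (ddBasis h y) =
      if h = x⁻¹ * g * x then (ddTheta β g x y : k) • (ddBasis g (x * y) : DD k G) else 0 := by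
  funext ⟨p1, p2⟩
  simp only [ddMul, ddBasis, Prod.mk.injEq, ite_mul, one_mul, zero_mul, mul_ite, mul_one,
    mul_zero]
  rw [Finset.sum_eq_single x (by aesop) (by simp)]
  split_ifs <;> simp_all [ddBasis, inv_mul_eq_iff_eq_mul]

lemma map_range_eq_range_of_comp_eq {k A : Type*} [Field k] [AddCommGroup A]
    [Module k A] {u v p q : Module.End k A} {c : kˣ} (hu : u ∘ₗ q = u) (hp : p ∘ₗ u = u)
    (huv : u ∘ₗ v = (c : k) • p) : (LinearMap.range q).map u = LinearMap.range p := by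
  rw [← LinearMap.range_comp, hu]
  refine le_antisymm (hp ▸ LinearMap.range_comp_le_range u p) ?_
  rw [← LinearMap.range_smul p _ c.ne_zero, ← huv]
  exact LinearMap.range_comp_le_range v u

lemma inv_smul_comp_apply_of_comp_eq_smul {k A : Type*} [Field k] [AddCommGroup A] [Module k A]
    {f g p : Module.End k A} {c : kˣ} (hfg : f ∘ₗ g = (c : k) • p) (hp : IsIdempotentElem p)
    {a : A} (ha : a ∈ LinearMap.range p) : ((c⁻¹ : kˣ) : k) • f (g a) = a := by
  rw [← LinearMap.comp_apply, hfg, LinearMap.smul_apply, smul_smul, ← Units.val_mul,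
    inv_mul_cancel, Units.val_one, one_smul]
  exact (LinearMap.IsIdempotentElem.mem_range_iff hp).mp ha

section Representation

variable {k G A : Type*} [Field k] [Group G] [Fintype G] [DecidableEq G]
  [AddCommGroup A] [Module k A] {β : G → G → G → kˣ} {ρ : DD k G → (A →ₗ[k] A)}

lemma rho_basis_comp_basis (hsmul : ∀ (c : k) (a : DD k G), ρ (c • a) = c • ρ a)
    (hmul : ∀ a b : DD k G, ρ (ddMul β a b) = ρ a ∘ₗ ρ b) (g x h y : G) :
    ρ (ddBasis g x) ∘ₗ ρ (ddBasis h y) =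
      if h = x⁻¹ * g * x then (ddTheta β g x y : k) • ρ (ddBasis g (x * y)) else 0 := by
  rw [← hmul, ddMul_basis]
  split_ifs
  · exact hsmul _ _
  · simpa using hsmul 0 0

lemma rho_basis_one_comp (hβ : IsNormalized3Cocycle β)
    (hsmul : ∀ (c : k) (a : DD k G), ρ (c • a) = c • ρ a)
    (hmul : ∀ a b : DD k G, ρ (ddMul β a b) = ρ a ∘ₗ ρ b) (g x : G) :
    ρ (ddBasis g 1) ∘ₗ ρ (ddBasis g x) = ρ (ddBasis g x) := by
  rw [rho_basis_comp_basis hsmul hmul, if_pos (by group), ddTheta_one_left hβ, one_mul,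
    Units.val_one, one_smul]

lemma rho_basis_comp_one (hβ : IsNormalized3Cocycle β)
    (hsmul : ∀ (c : k) (a : DD k G), ρ (c • a) = c • ρ a)
    (hmul : ∀ a b : DD k G, ρ (ddMul β a b) = ρ a ∘ₗ ρ b) (g x : G) :
    ρ (ddBasis g x) ∘ₗ ρ (ddBasis (x⁻¹ * g * x) 1) = ρ (ddBasis g x) := by
  rw [rho_basis_comp_basis hsmul hmul, if_pos rfl, ddTheta_one_right hβ, mul_one,
    Units.val_one, one_smul]

lemma rho_basis_inv_comp (hsmul : ∀ (c : k) (a : DD k G), ρ (c • a) = c • ρ a)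
    (hmul : ∀ a b : DD k G, ρ (ddMul β a b) = ρ a ∘ₗ ρ b) (g x : G) :
    ρ (ddBasis (x⁻¹ * g * x) x⁻¹) ∘ₗ ρ (ddBasis g x) =
      (ddTheta β (x⁻¹ * g * x) x⁻¹ x : k) • ρ (ddBasis (x⁻¹ * g * x) 1) := by
  rw [rho_basis_comp_basis hsmul hmul, if_pos (by group), inv_mul_cancel]

lemma rho_basis_comp_inv (hβ : IsNormalized3Cocycle β)
    (hsmul : ∀ (c : k) (a : DD k G), ρ (c • a) = c • ρ a)
    (hmul : ∀ a b : DD k G, ρ (ddMul β a b) = ρ a ∘ₗ ρ b) (g x : G) :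
    ρ (ddBasis g x) ∘ₗ ρ (ddBasis (x⁻¹ * g * x) x⁻¹) =
      (ddTheta β (x⁻¹ * g * x) x⁻¹ x : k) • ρ (ddBasis g 1) := by
  rw [rho_basis_comp_basis hsmul hmul, if_pos rfl, mul_inv_cancel, ddTheta_inv_comm hβ]

end Representation

theorem stmt9_general {k G : Type*} [Field k] [Group G] [Fintype G] [DecidableEq G]
    (β : G → G → G → kˣ) (hβ : IsNormalized3Cocycle β)
    {A : Type*} [AddCommGroup A] [Module k A]
    (ρ : DD k G → (A →ₗ[k] A))
    (hsmul : ∀ (c : k) (a : DD k G), ρ (c • a) = c • ρ a)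
    (hmul : ∀ a b : DD k G, ρ (ddMul β a b) = ρ a ∘ₗ ρ b) :
    (∀ g x : G, ρ (ddBasis g x) =
        ρ (ddBasis g 1) ∘ₗ ρ (ddBasis g x) ∘ₗ ρ (ddBasis (x⁻¹ * g * x) 1)) ∧
    (∀ g x h : G, h ≠ x⁻¹ * g * x →
        ∀ a ∈ LinearMap.range (ρ (ddBasis h 1)), ρ (ddBasis g x) a = 0) ∧
    (∀ (g x : G) (a : A), ρ (ddBasis g x) a ∈ LinearMap.range (ρ (ddBasis g 1))) ∧
    (∀ g x : G, ∀ a ∈ LinearMap.range (ρ (ddBasis (x⁻¹ * g * x) 1)),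
        (((ddTheta β (x⁻¹ * g * x) x⁻¹ x)⁻¹ : kˣ) : k) •
          ρ (ddBasis (x⁻¹ * g * x) x⁻¹) (ρ (ddBasis g x) a) = a) ∧
    (∀ g x : G, ∀ b ∈ LinearMap.range (ρ (ddBasis g 1)),
        ρ (ddBasis g x) ((((ddTheta β (x⁻¹ * g * x) x⁻¹ x)⁻¹ : kˣ) : k) •
          ρ (ddBasis (x⁻¹ * g * x) x⁻¹) b) = b) ∧
    (∀ g x : G,
        Submodule.map (ρ (ddBasis g x)) (LinearMap.range (ρ (ddBasis (x⁻¹ * g * x) 1)))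
          = LinearMap.range (ρ (ddBasis g 1))) := by
  have one_comp := rho_basis_one_comp hβ hsmul hmul
  have comp_one := rho_basis_comp_one hβ hsmul hmul
  have hπ (g : G) : IsIdempotentElem (ρ (ddBasis g 1)) := one_comp g 1
  refine ⟨fun g x => by rw [comp_one, one_comp], ?_, fun g x a => ⟨_, congr($(one_comp g x) a)⟩,
    fun g x a ha => inv_smul_comp_apply_of_comp_eq_smul (rho_basis_inv_comp hsmul hmul g x)
      (hπ _) ha,
    fun g x b hb => ?_, fun g x => map_range_eq_range_of_comp_eq (comp_one g x) (one_comp g x)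
      (rho_basis_comp_inv hβ hsmul hmul g x)⟩
  · rintro g x h hne _ ⟨a, rfl⟩
    have hzero := rho_basis_comp_basis hsmul hmul g x h 1
    rw [if_neg hne] at hzero
    exact congr($hzero a)
  · rw [map_smul]
    exact inv_smul_comp_apply_of_comp_eq_smul (rho_basis_comp_inv hβ hsmul hmul g x) (hπ g) hb

/-- in a left `D^β(k[G])`-module, `ρ(⟨g,x⟩)` vanishes off `A_{x⁻¹gx}`,
maps into `A_g`, and restricts to an isomorphism `A_{x⁻¹gx} ≅ A_g` with inverse
`θ_{x⁻¹gx}(x⁻¹,x)⁻¹ ρ(⟨x⁻¹gx,x⁻¹⟩)`. -/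
theorem stmt9 {k G : Type*} [Field k] [Group G] [Fintype G] [DecidableEq G]
    (β : G → G → G → kˣ) (hβ : IsNormalized3Cocycle β)
    {A : Type*} [AddCommGroup A] [Module k A]
    (ρ : DD k G → (A →ₗ[k] A))
    (hadd : ∀ a b : DD k G, ρ (a + b) = ρ a + ρ b)
    (hsmul : ∀ (c : k) (a : DD k G), ρ (c • a) = c • ρ a)
    (hmul : ∀ a b : DD k G, ρ (ddMul β a b) = ρ a ∘ₗ ρ b)
    (hone : ρ (ddOne k G) = LinearMap.id) :
    (∀ g x : G, ρ (ddBasis g x) =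
        ρ (ddBasis g 1) ∘ₗ ρ (ddBasis g x) ∘ₗ ρ (ddBasis (x⁻¹ * g * x) 1)) ∧
    (∀ g x h : G, h ≠ x⁻¹ * g * x →
        ∀ a ∈ LinearMap.range (ρ (ddBasis h 1)), ρ (ddBasis g x) a = 0) ∧
    (∀ (g x : G) (a : A), ρ (ddBasis g x) a ∈ LinearMap.range (ρ (ddBasis g 1))) ∧
    (∀ g x : G, ∀ a ∈ LinearMap.range (ρ (ddBasis (x⁻¹ * g * x) 1)),
        (((ddTheta β (x⁻¹ * g * x) x⁻¹ x)⁻¹ : kˣ) : k) •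
          ρ (ddBasis (x⁻¹ * g * x) x⁻¹) (ρ (ddBasis g x) a) = a) ∧
    (∀ g x : G, ∀ b ∈ LinearMap.range (ρ (ddBasis g 1)),
        ρ (ddBasis g x) ((((ddTheta β (x⁻¹ * g * x) x⁻¹ x)⁻¹ : kˣ) : k) •
          ρ (ddBasis (x⁻¹ * g * x) x⁻¹) b) = b) ∧
    (∀ g x : G,
        Submodule.map (ρ (ddBasis g x)) (LinearMap.range (ρ (ddBasis (x⁻¹ * g * x) 1)))
          = LinearMap.range (ρ (ddBasis g 1))) :=
  stmt9_general β hβ ρ hsmul hmul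

end StringyOrbifold
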